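/- With ℙ = δ_{ξ₁} on a compact Ξ ⊆ ℝ^d, quadratic cost c(ξ,ζ)=|ξ−ζ|², and a continuous function f : Ξ → ℝ, the distributionally robust value sup{ ∫ f dℚ : ℚ probability on Ξ, ∫ |ξ₁−ζ|² dℚ(ζ) ≤ m } equals sup over pairs (ζ₀, ζ₁) ∈ Ξ×Ξ and t ∈ [0,1] with t|ξ₁−ζ₀|² + (1−t)|ξ₁−ζ₁|² ≤ m of t f(ζ₀) + (1−t) f(ζ₁); in particular the supremum over all admissible ℚ is attained by a measure supported on at most two points. -/

import Mathlib

/-!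
Weak duality for a single moment constraint `∫ c dℚ ≤ m`. Let `v` be the largest value
`t f(a) + (1 - t) f(b)` over admissible two-point measures; it is attained by compactness. Applied
with `t = (c b - m) / (c b - c a)`, the two-point bound says that every slope
`(f b - v) / (c b - m)` with `c b > m` is at most every slope `(v - f a) / (m - c a)` with
`c a < m`, so a multiplier `μ ≥ 0` fits between them and `f ≤ v + μ (c - m)` pointwise.
Integrating against an admissible `ℚ` gives `∫ f dℚ ≤ v`. If no point has `c < m`, the
constraint forces `c = m` `ℚ`-a.e., and there `f ≤ v`.
-/

open MeasureTheory Set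

section TwoPointBound

variable {X : Type*}

/-- `v` bounds `∫ f` over the measures `t δ_a + (1 - t) δ_b` satisfying `∫ c ≤ m`. -/
def TwoPointBound (c f : X → ℝ) (m v : ℝ) : Prop :=
  ∀ a b, ∀ t ∈ Icc (0 : ℝ) 1, t * c a + (1 - t) * c b ≤ m → t * f a + (1 - t) * f b ≤ v

variable {c f : X → ℝ} {m v : ℝ}

namespace TwoPointBound

lemma le_of_le (h : TwoPointBound c f m v) {a : X} (ha : c a ≤ m) : f a ≤ v := by
  simpa using h a a 1 (right_mem_Icc.2 zero_le_one) (by simpa using ha)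

lemma div_le_div (h : TwoPointBound c f m v) {a b : X} (ha : c a < m) (hb : m < c b) :
    (f b - v) / (c b - m) ≤ (v - f a) / (m - c a) := by
  have hab : 0 < c b - c a := by linarith
  set t := (c b - m) / (c b - c a)
  have ht : t ∈ Icc (0 : ℝ) 1 :=
    ⟨div_nonneg (by linarith) hab.le, (div_le_one hab).2 (by linarith)⟩
  have hcost : t * c a + (1 - t) * c b = m := by
    simp only [t]; field_simp; ring
  have hval : t * f a + (1 - t) * f b = ((c b - m) * f a + (m - c a) * f b) / (c b - c a) := by
    simp only [t]; field_simp; ring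
  have hle := h a b t ht hcost.le
  rw [hval, div_le_iff₀ hab] at hle
  rw [div_le_div_iff₀ (by linarith) (by linarith)]
  linarith

lemma exists_multiplier (h : TwoPointBound c f m v) {x₀ : X} (hx₀ : c x₀ < m) :
    ∃ μ ≥ 0, ∀ x, f x ≤ v + μ * (c x - m) := by
  obtain ⟨μ, hlow, hup⟩ := exists_between_of_forall_le
    (s := insert 0 ((fun b ↦ (f b - v) / (c b - m)) '' {b | m < c b}))
    (t := (fun a ↦ (v - f a) / (m - c a)) '' {a | c a < m})
    (insert_nonempty _ _) ⟨_, mem_image_of_mem _ hx₀⟩ (by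
      rintro _ (rfl | ⟨b, hb, rfl⟩) _ ⟨a, ha, rfl⟩
      · exact div_nonneg (sub_nonneg.2 (h.le_of_le ha.le)) (sub_nonneg.2 ha.le)
      · exact h.div_le_div ha hb)
  refine ⟨μ, hlow (mem_insert _ _), fun x ↦ ?_⟩
  rcases lt_trichotomy (c x) m with hx | hx | hx
  · have hμ := hup (mem_image_of_mem _ hx)
    rw [le_div_iff₀ (sub_pos.2 hx)] at hμ
    linarith
  · rw [hx, sub_self, mul_zero, add_zero]
    exact h.le_of_le hx.le
  · have hμ := hlow (mem_insert_of_mem _ (mem_image_of_mem _ hx))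
    rw [div_le_iff₀ (sub_pos.2 hx)] at hμ
    linarith

lemma integral_le [MeasurableSpace X] (h : TwoPointBound c f m v) {Q : Measure X}
    [IsProbabilityMeasure Q] (hc : Integrable c Q) (hf : Integrable f Q)
    (hQ : ∫ x, c x ∂Q ≤ m) : ∫ x, f x ∂Q ≤ v := by
  by_cases hslater : ∃ x₀, c x₀ < m
  · obtain ⟨x₀, hx₀⟩ := hslater
    obtain ⟨μ, hμ, hbound⟩ := h.exists_multiplier hx₀
    have hcm : Integrable (fun x ↦ c x - m) Q := hc.sub (integrable_const m)
    have hlin : Integrable (fun x ↦ v + μ * (c x - m)) Q :=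
      (integrable_const v).add (hcm.const_mul μ)
    calc ∫ x, f x ∂Q ≤ ∫ x, v + μ * (c x - m) ∂Q := integral_mono hf hlin hbound
      _ = v + μ * (∫ x, c x ∂Q - m) := by
        rw [integral_add (integrable_const v) (hcm.const_mul μ), integral_const_mul,
          integral_sub hc (integrable_const m)]
        simp
      _ ≤ v := by nlinarith
  · simp only [not_exists, not_lt] at hslater
    have hnonneg : 0 ≤ fun x ↦ c x - m := fun x ↦ sub_nonneg.2 (hslater x)
    have hzero : ∫ x, c x - m ∂Q = 0 := by
      refine le_antisymm ?_ (integral_nonneg hnonneg)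
      rw [integral_sub hc (integrable_const m)]
      simpa using hQ
    have hcm := (integral_eq_zero_iff_of_nonneg hnonneg (hc.sub (integrable_const m))).1 hzero
    calc ∫ x, f x ∂Q ≤ ∫ _, v ∂Q :=
          integral_mono_ae hf (integrable_const v)
            (hcm.mono fun x hx ↦ h.le_of_le (sub_eq_zero.1 hx).le)
      _ = v := by simp

end TwoPointBound

lemma exists_twoPointBound_of_compactSpace [TopologicalSpace X] [CompactSpace X]
    (hc : Continuous c) (hf : Continuous f) {x₀ : X} (hx₀ : c x₀ ≤ m) :
    ∃ a b, ∃ t ∈ Icc (0 : ℝ) 1, t * c a + (1 - t) * c b ≤ m ∧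
      TwoPointBound c f m (t * f a + (1 - t) * f b) := by
  let D : Set ((X × X) × ℝ) :=
    {p | p.2 ∈ Icc 0 1} ∩ {p | p.2 * c p.1.1 + (1 - p.2) * c p.1.2 ≤ m}
  have hD : IsCompact D :=
    (isCompact_univ.prod isCompact_Icc).of_isClosed_subset
      ((isClosed_Icc.preimage continuous_snd).inter (isClosed_le (by fun_prop) continuous_const))
      fun p hp ↦ ⟨mem_univ _, hp.1⟩
  obtain ⟨⟨⟨a, b⟩, t⟩, ⟨ht, hab⟩, hmax⟩ := hD.exists_isMaxOn
    ⟨((x₀, x₀), 1), right_mem_Icc.2 zero_le_one, by simpa using hx₀⟩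
    (f := fun p ↦ p.2 * f p.1.1 + (1 - p.2) * f p.1.2) (by fun_prop)
  exact ⟨a, b, t, ht, hab, fun a' b' t' ht' hab' ↦
    hmax (show ((a', b'), t') ∈ D from ⟨ht', hab'⟩)⟩

end TwoPointBound

section TwoPointMeasure

variable {X : Type*} [MeasurableSpace X] {t : ℝ}

lemma isProbabilityMeasure_twoPoint (a b : X) (ht : t ∈ Icc (0 : ℝ) 1) :
    IsProbabilityMeasure
      (ENNReal.ofReal t • Measure.dirac a + ENNReal.ofReal (1 - t) • Measure.dirac b) := by
  constructor
  simp [← ENNReal.ofReal_add ht.1 (sub_nonneg.2 ht.2)]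

lemma integral_twoPoint [MeasurableSingletonClass X] (a b : X) (ht : t ∈ Icc (0 : ℝ) 1) (g : X → ℝ) :
    ∫ x, g x ∂(ENNReal.ofReal t • Measure.dirac a + ENNReal.ofReal (1 - t) • Measure.dirac b)
      = t * g a + (1 - t) * g b := by
  rw [integral_add_measure ((integrable_dirac enorm_lt_top).smul_measure ENNReal.ofReal_ne_top)
      ((integrable_dirac enorm_lt_top).smul_measure ENNReal.ofReal_ne_top),
    integral_smul_measure, integral_smul_measure, integral_dirac, integral_dirac,
    ENNReal.toReal_ofReal ht.1, ENNReal.toReal_ofReal (sub_nonneg.2 ht.2), smul_eq_mul,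
    smul_eq_mul]

end TwoPointMeasure

theorem dro_dirac_two_point_general {d : ℕ} (Ξ : Set (EuclideanSpace ℝ (Fin d)))
    (hΞc : IsCompact Ξ)
    (ξ₁ : Ξ) (m : ℝ) (hm : 0 ≤ m) (f : Ξ → ℝ) (hf : Continuous f) :
    sSup {r : ℝ | ∃ Q : Measure Ξ, IsProbabilityMeasure Q ∧
        (∫ ζ : Ξ, ‖(ξ₁ : EuclideanSpace ℝ (Fin d)) - (ζ : EuclideanSpace ℝ (Fin d))‖ ^ 2 ∂Q) ≤ m ∧
        r = ∫ ζ, f ζ ∂Q}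
      = sSup {r : ℝ | ∃ ζ₀ ζ₁ : Ξ, ∃ t ∈ Set.Icc (0 : ℝ) 1,
          t * ‖(ξ₁ : EuclideanSpace ℝ (Fin d)) - (ζ₀ : EuclideanSpace ℝ (Fin d))‖ ^ 2 +
            (1 - t) * ‖(ξ₁ : EuclideanSpace ℝ (Fin d)) - (ζ₁ : EuclideanSpace ℝ (Fin d))‖ ^ 2 ≤ m ∧
          r = t * f ζ₀ + (1 - t) * f ζ₁} ∧
    ∃ ζ₀ ζ₁ : Ξ, ∃ t ∈ Set.Icc (0 : ℝ) 1,
      t * ‖(ξ₁ : EuclideanSpace ℝ (Fin d)) - (ζ₀ : EuclideanSpace ℝ (Fin d))‖ ^ 2 +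
        (1 - t) * ‖(ξ₁ : EuclideanSpace ℝ (Fin d)) - (ζ₁ : EuclideanSpace ℝ (Fin d))‖ ^ 2 ≤ m ∧
      (∫ ζ, f ζ ∂(ENNReal.ofReal t • Measure.dirac ζ₀ + ENNReal.ofReal (1 - t) • Measure.dirac ζ₁))
        = sSup {r : ℝ | ∃ Q : Measure Ξ, IsProbabilityMeasure Q ∧
            (∫ ζ : Ξ, ‖(ξ₁ : EuclideanSpace ℝ (Fin d)) - (ζ : EuclideanSpace ℝ (Fin d))‖ ^ 2 ∂Q) ≤ m ∧
            r = ∫ ζ, f ζ ∂Q} := by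
  have : CompactSpace Ξ := isCompact_iff_compactSpace.mp hΞc
  set c : Ξ → ℝ := fun ζ ↦ ‖(ξ₁ : EuclideanSpace ℝ (Fin d)) - ζ‖ ^ 2
  have hc : Continuous c := by fun_prop
  have integrable {g : Ξ → ℝ} (hg : Continuous g) (Q : Measure Ξ) [IsFiniteMeasure Q] :
      Integrable g Q :=
    hg.integrable_of_hasCompactSupport (HasCompactSupport.of_compactSpace g)
  obtain ⟨ζ₀, ζ₁, t, ht, hfeas, hbound⟩ :=
    exists_twoPointBound_of_compactSpace hc hf (x₀ := ξ₁) (by simpa [c] using hm)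
  have hQ₀ := integral_twoPoint ζ₀ ζ₁ ht
  have hmeasures : IsGreatest {r : ℝ | ∃ Q : Measure Ξ, IsProbabilityMeasure Q ∧
      ∫ ζ, c ζ ∂Q ≤ m ∧ r = ∫ ζ, f ζ ∂Q} (t * f ζ₀ + (1 - t) * f ζ₁) :=
    ⟨⟨_, isProbabilityMeasure_twoPoint ζ₀ ζ₁ ht, (hQ₀ c).trans_le hfeas, (hQ₀ f).symm⟩,
      by rintro _ ⟨Q, hQ, hQm, rfl⟩; exact hbound.integral_le (integrable hc Q) (integrable hf Q) hQm⟩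
  have hpairs : IsGreatest {r : ℝ | ∃ a b : Ξ, ∃ s ∈ Set.Icc (0 : ℝ) 1,
      s * c a + (1 - s) * c b ≤ m ∧ r = s * f a + (1 - s) * f b} (t * f ζ₀ + (1 - t) * f ζ₁) :=
    ⟨⟨ζ₀, ζ₁, t, ht, hfeas, rfl⟩, by rintro _ ⟨a, b, s, hs, hab, rfl⟩; exact hbound a b s hs hab⟩
  exact ⟨hmeasures.csSup_eq.trans hpairs.csSup_eq.symm, ζ₀, ζ₁, t, ht, hfeas,
    (hQ₀ f).trans hmeasures.csSup_eq.symm⟩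

/-- With `ℙ = δ_{ξ₁}` on a nonempty compact convex `Ξ ⊆ ℝ^d`, quadratic cost and `f`
continuous, the distributionally robust value
`sup { ∫ f dℚ : ℚ probability on Ξ, ∫ |ξ₁ - ζ|² dℚ(ζ) ≤ m }` equals the supremum over
pairs `(ζ₀, ζ₁) ∈ Ξ × Ξ` and `t ∈ [0,1]` with `t |ξ₁ - ζ₀|² + (1-t) |ξ₁ - ζ₁|² ≤ m` of
`t f(ζ₀) + (1-t) f(ζ₁)`; in particular the supremum is attained by a measure supported on
at most two points. -/
theorem dro_dirac_two_point {d : ℕ} (Ξ : Set (EuclideanSpace ℝ (Fin d)))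
    (hΞc : IsCompact Ξ) (hconv : Convex ℝ Ξ) (hne : Ξ.Nonempty)
    (ξ₁ : Ξ) (m : ℝ) (hm : 0 ≤ m) (f : Ξ → ℝ) (hf : Continuous f) :
    sSup {r : ℝ | ∃ Q : Measure Ξ, IsProbabilityMeasure Q ∧
        (∫ ζ : Ξ, ‖(ξ₁ : EuclideanSpace ℝ (Fin d)) - (ζ : EuclideanSpace ℝ (Fin d))‖ ^ 2 ∂Q) ≤ m ∧
        r = ∫ ζ, f ζ ∂Q}
      = sSup {r : ℝ | ∃ ζ₀ ζ₁ : Ξ, ∃ t ∈ Set.Icc (0 : ℝ) 1,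
          t * ‖(ξ₁ : EuclideanSpace ℝ (Fin d)) - (ζ₀ : EuclideanSpace ℝ (Fin d))‖ ^ 2 +
            (1 - t) * ‖(ξ₁ : EuclideanSpace ℝ (Fin d)) - (ζ₁ : EuclideanSpace ℝ (Fin d))‖ ^ 2 ≤ m ∧
          r = t * f ζ₀ + (1 - t) * f ζ₁} ∧
    ∃ ζ₀ ζ₁ : Ξ, ∃ t ∈ Set.Icc (0 : ℝ) 1,
      t * ‖(ξ₁ : EuclideanSpace ℝ (Fin d)) - (ζ₀ : EuclideanSpace ℝ (Fin d))‖ ^ 2 +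
        (1 - t) * ‖(ξ₁ : EuclideanSpace ℝ (Fin d)) - (ζ₁ : EuclideanSpace ℝ (Fin d))‖ ^ 2 ≤ m ∧
      (∫ ζ, f ζ ∂(ENNReal.ofReal t • Measure.dirac ζ₀ + ENNReal.ofReal (1 - t) • Measure.dirac ζ₁))
        = sSup {r : ℝ | ∃ Q : Measure Ξ, IsProbabilityMeasure Q ∧
            (∫ ζ : Ξ, ‖(ξ₁ : EuclideanSpace ℝ (Fin d)) - (ζ : EuclideanSpace ℝ (Fin d))‖ ^ 2 ∂Q) ≤ m ∧
            r = ∫ ζ, f ζ ∂Q} :=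
  dro_dirac_two_point_general Ξ hΞc ξ₁ m hm f hf
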